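/- Define a relation on algebraic numbers by α ≼ β if and only if there exists a ring homomorphism σ from ℚ̄ to ℚ̄ and a natural number n such that σ(β) = α + n. Then ≼ induces a partial order on the set of Galois-conjugacy classes of algebraic numbers; in particular if α ≼ β and β ≼ α then α and β are Galois conjugate. -/

import Mathlib

/-! If `σ β = α + n` and `τ α = β + m`, then `τ ∘ σ` moves `β` to `β + (n + m)`, and iterating it
produces the roots `β + j (n + m)` of the minimal polynomial of `β`. A nonzero polynomial has finitely
many roots, so in characteristic zero `n + m = 0`, hence `m = 0` and `τ α = β`. -/

open Polynomial

theorem AlgHom.iterate_apply_eq_add {K L : Type*} [CommRing K] [CommRing L] [Algebra K L]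
    (ρ : L →ₐ[K] L) {x : L} {c : K} (h : ρ x = x + algebraMap K L c) (j : ℕ) :
    ρ^[j] x = x + algebraMap K L (j * c) := by
  induction j with
  | zero => simp
  | succ j ih =>
    rw [Function.iterate_succ_apply', ih, map_add, h, AlgHom.commutes, Nat.cast_succ,
      add_one_mul, map_add]
    ring

theorem AlgHom.apply_mem_rootSet {K L : Type*} [Field K] [CommRing L]
    [IsDomain L] [Algebra K L] (ρ : L →ₐ[K] L) {p : K[X]} {y : L} (hy : y ∈ p.rootSet L) :
    ρ y ∈ p.rootSet L := by
  rw [mem_rootSet] at hy ⊢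
  exact ⟨hy.1, by rw [aeval_algHom_apply, hy.2, map_zero]⟩

theorem IsIntegral.eq_zero_of_algHom_apply_eq_add {K L : Type*} [Field K] [CharZero K]
    [CommRing L] [IsDomain L] [Algebra K L] {x : L} (hx : IsIntegral K x) (ρ : L →ₐ[K] L)
    {c : K} (h : ρ x = x + algebraMap K L c) : c = 0 := by
  by_contra hc
  have hroots : ∀ j : ℕ, x + algebraMap K L (j * c) ∈ (minpoly K x).rootSet L := by
    intro j
    rw [← ρ.iterate_apply_eq_add h j]
    induction j with
    | zero => exact (mem_rootSet.2 ⟨minpoly.ne_zero hx, minpoly.aeval K x⟩)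
    | succ j ih =>
      rw [Function.iterate_succ_apply']
      exact ρ.apply_mem_rootSet ih
  have hinj : Function.Injective fun j : ℕ => x + algebraMap K L (j * c) := by
    intro i j hij
    have hmul : (i : K) * c = j * c := (algebraMap K L).injective (add_left_cancel hij)
    exact_mod_cast mul_right_cancel₀ hc hmul
  exact Set.infinite_of_injective_forall_mem hinj hroots ((minpoly K x).rootSet_finite L)

/-- The relation `α ≼ β ↔ ∃ σ : ℚ̄ →+* ℚ̄, ∃ n : ℕ, σ β = α + n` is antisymmetric
up to Galois conjugacy: if `α ≼ β` and `β ≼ α`, then `α` and `β` are Galois conjugate. -/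
theorem stmt_2 (α β : AlgebraicClosure ℚ)
    (h₁ : ∃ (σ : AlgebraicClosure ℚ →+* AlgebraicClosure ℚ) (n : ℕ),
      σ β = α + (n : AlgebraicClosure ℚ))
    (h₂ : ∃ (σ : AlgebraicClosure ℚ →+* AlgebraicClosure ℚ) (n : ℕ),
      σ α = β + (n : AlgebraicClosure ℚ)) :
    ∃ σ : AlgebraicClosure ℚ →+* AlgebraicClosure ℚ, σ α = β := by
  obtain ⟨σ, n, hσ⟩ := h₁
  obtain ⟨τ, m, hτ⟩ := h₂
  have hshift : (τ.comp σ).toRatAlgHom β = β + algebraMap ℚ _ ((n + m : ℕ) : ℚ) := by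
    change τ (σ β) = _
    rw [hσ, map_add, hτ, map_natCast, map_natCast]
    push_cast
    ring
  have hsum : ((n + m : ℕ) : ℚ) = 0 :=
    ((AlgebraicClosure.isAlgebraic ℚ).isAlgebraic β).isIntegral.eq_zero_of_algHom_apply_eq_add _ hshift
  have hm : m = 0 := by
    norm_cast at hsum
    omega
  exact ⟨τ, by rw [hτ, hm, Nat.cast_zero, add_zero]⟩
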